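/- arXiv:1904.07115 — 4 statements merged into one kernel-verified Lean document; each statement's English description precedes it below -/
import Mathlib

section
/- Let q ∈ [1,2] and let (M_n)_{n≥1} be a complex-valued martingale (with respect to some filtration) such that E[|M_n|^q] < ∞ for all n. Then for every n ≥ 1, E[|M_{n+1}|^q] ≤ E[|M_n|^q] + 2^q · E[|M_{n+1} − M_n|^q]. -/
/-!
For `1 ≤ q ≤ 2` and `x, y` in a real inner product space,
`‖x + y‖ ^ q ≤ ‖x‖ ^ q + q ‖x‖ ^ (q - 2) ⟪x, y⟫ + 2 ^ q ‖y‖ ^ q`, the middle term being the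
derivative of `‖·‖ ^ q` at `x` in the direction `y`. Write `‖x + y‖ ^ q = (‖x + y‖ ^ 2) ^ (q / 2)`
and bound the concave function `t ↦ t ^ (q / 2)` by its tangent at `‖x‖ ^ 2` when `‖y‖ ≤ 2 ‖x‖`,
and at `(‖y‖ - ‖x‖) ^ 2` otherwise. Apply this with `x = M n` and `y = M (n + 1) - M n`, and
integrate: the gradient term is `⟪W, M (n + 1) - M n⟫` with `W` measurable for `𝒢 n`, so by the
pull-out property its integral is that of `⟪W, 𝔼[M (n + 1) - M n | 𝒢 n]⟫ = 0`.
-/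

open scoped InnerProductSpace

open MeasureTheory ProbabilityTheory Filter

theorem one_add_mul_two_rpow_one_sub_le {q : ℝ} (hq1 : 1 ≤ q) (hq2 : q ≤ 2) :
    1 + q * 2 ^ (1 - q) ≤ (2 : ℝ) ^ q := by
  set u : ℝ := 2 ^ (q - 1) with hu
  have hu_pos : 0 < u := by positivity
  have hu_le : u ≤ q := by
    have h := rpow_one_add_le_one_add_mul_self (s := 1) (by norm_num) (p := q - 1)
      (by linarith) (by linarith)
    rw [one_add_one_eq_two, mul_one, add_sub_cancel] at h
    exact h
  have hq_le : q ≤ u ^ 2 := by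
    have hexp : u ^ 2 = Real.exp (2 * (q - 1) * Real.log 2) := by
      rw [hu, ← Real.rpow_mul_natCast zero_le_two, Real.rpow_def_of_pos two_pos]
      ring_nf
    rw [hexp]
    nlinarith [Real.add_one_le_exp (2 * (q - 1) * Real.log 2), Real.log_two_gt_d9]
  have h2q : (2 : ℝ) ^ q = 2 * u := by
    rw [hu, ← Real.rpow_one_add' zero_le_two (by linarith)]
    ring_nf
  have h2q' : (2 : ℝ) ^ (1 - q) = u⁻¹ := by
    rw [hu, ← Real.rpow_neg zero_le_two, neg_sub]
  rw [h2q, h2q', ← sub_nonneg]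
  have key : 2 * u - (1 + q * u⁻¹) = (2 * u ^ 2 - u - q) / u := by
    field_simp
    ring
  rw [key]
  exact div_nonneg (by nlinarith) hu_pos.le

theorem rpow_div_two_le_tangent {T u q : ℝ} (hT : 0 ≤ T) (hu : 0 < u) (hq0 : 0 ≤ q)
    (hq2 : q ≤ 2) : T ^ (q / 2) ≤ u ^ q + q / 2 * u ^ (q - 2) * (T - u ^ 2) := by
  have hbern := rpow_one_add_le_one_add_mul_self (s := T / u ^ 2 - 1)
    (by have : 0 ≤ T / u ^ 2 := by positivity
        linarith) (p := q / 2) (by linarith) (by linarith)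
  rw [add_sub_cancel, Real.div_rpow hT (by positivity),
    Real.rpow_div_two_eq_sqrt _ (sq_nonneg u), Real.sqrt_sq hu.le,
    div_le_iff₀ (by positivity)] at hbern
  rw [Real.rpow_sub hu, Real.rpow_two]
  refine hbern.trans_eq ?_
  field_simp

theorem rpow_mul_sq_le_of_le_two_mul {a b q : ℝ} (ha : 0 < a) (hb : 0 ≤ b) (hab : b ≤ 2 * a)
    (hq2 : q ≤ 2) : a ^ (q - 2) * b ^ 2 ≤ 2 ^ (2 - q) * b ^ q := by
  have hratio : a ^ (q - 2) * b ^ 2 = (b / a) ^ (2 - q) * b ^ q := by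
    rw [Real.div_rpow hb ha.le, div_mul_eq_mul_div, ← Real.rpow_add' hb (by norm_num),
      sub_add_cancel, Real.rpow_two, div_eq_mul_inv, ← Real.rpow_neg ha.le, neg_sub, mul_comm]
  rw [hratio]
  gcongr
  rw [div_le_iff₀ ha]
  linarith

theorem rpow_sub_one_mul_le_of_two_mul_le {a b q : ℝ} (ha : 0 ≤ a) (hab : 2 * a ≤ b)
    (hq1 : 1 ≤ q) : a ^ (q - 1) * b ≤ 2 ^ (1 - q) * b ^ q := by
  have hb : 0 ≤ b := by linarith
  calc a ^ (q - 1) * b ≤ (b / 2) ^ (q - 1) * b := by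
        gcongr
        linarith
    _ = 2 ^ (1 - q) * b ^ q := by
        rw [Real.div_rpow hb zero_le_two, div_eq_mul_inv, ← Real.rpow_neg zero_le_two, neg_sub,
          mul_right_comm, ← Real.rpow_add_one' hb (by linarith), sub_add_cancel, mul_comm]

theorem rpow_div_two_le_of_le_two_mul {a b s q : ℝ} (ha : 0 < a) (hb : 0 ≤ b) (hab : b ≤ 2 * a)
    (hq1 : 1 ≤ q) (hq2 : q ≤ 2) (hT : 0 ≤ a ^ 2 + 2 * s + b ^ 2) :
    (a ^ 2 + 2 * s + b ^ 2) ^ (q / 2) ≤ a ^ q + q * a ^ (q - 2) * s + 2 ^ q * b ^ q := by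
  have hcorr : q / 2 * (a ^ (q - 2) * b ^ 2) ≤ 2 ^ q * b ^ q :=
    calc q / 2 * (a ^ (q - 2) * b ^ 2) ≤ q / 2 * (2 ^ (2 - q) * b ^ q) := by
          have := rpow_mul_sq_le_of_le_two_mul ha hb hab hq2
          gcongr
      _ = q * 2 ^ (1 - q) * b ^ q := by
          rw [show 2 - q = 1 + (1 - q) by ring, Real.rpow_add two_pos, Real.rpow_one]
          ring
      _ ≤ 2 ^ q * b ^ q := by
          gcongr
          linarith [one_add_mul_two_rpow_one_sub_le hq1 hq2]
  calc _ ≤ a ^ q + q / 2 * a ^ (q - 2) * (a ^ 2 + 2 * s + b ^ 2 - a ^ 2) :=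
        rpow_div_two_le_tangent hT ha (by linarith) hq2
    _ = a ^ q + q * a ^ (q - 2) * s + q / 2 * (a ^ (q - 2) * b ^ 2) := by ring
    _ ≤ _ := by gcongr

theorem rpow_div_two_le_of_two_mul_le {a b s q : ℝ} (ha : 0 < a) (hab : 2 * a ≤ b)
    (hs : |s| ≤ a * b) (hq1 : 1 ≤ q) (hq2 : q ≤ 2) (hT : 0 ≤ a ^ 2 + 2 * s + b ^ 2) :
    (a ^ 2 + 2 * s + b ^ 2) ^ (q / 2) ≤ a ^ q + q * a ^ (q - 2) * s + 2 ^ q * b ^ q := by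
  have hu : 0 < b - a := by linarith
  have hs' : 0 ≤ s + a * b := by linarith [neg_abs_le s]
  have hpow : a ^ (q - 1) = a ^ (q - 2) * a := by
    rw [← Real.rpow_add_one ha.ne']
    ring_nf
  have hscalar : b ^ q + q * (2 ^ (1 - q) * b ^ q) ≤ 2 ^ q * b ^ q := by
    have := mul_le_mul_of_nonneg_right (one_add_mul_two_rpow_one_sub_le hq1 hq2)
      (Real.rpow_nonneg (by linarith : (0 : ℝ) ≤ b) q)
    linarith
  calc _ ≤ (b - a) ^ q + q / 2 * (b - a) ^ (q - 2) * (a ^ 2 + 2 * s + b ^ 2 - (b - a) ^ 2) :=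
        rpow_div_two_le_tangent hT hu (by linarith) hq2
    _ = (b - a) ^ q + q * ((b - a) ^ (q - 2) * (s + a * b)) := by ring
    _ ≤ b ^ q + q * (a ^ (q - 2) * (s + a * b)) := by
        have hanti : (b - a) ^ (q - 2) ≤ a ^ (q - 2) :=
          Real.rpow_le_rpow_of_nonpos ha (by linarith) (by linarith)
        gcongr
        linarith
    _ = b ^ q + q * a ^ (q - 2) * s + q * (a ^ (q - 1) * b) := by
        rw [hpow]
        ring
    _ ≤ b ^ q + q * a ^ (q - 2) * s + q * (2 ^ (1 - q) * b ^ q) := by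
        have := rpow_sub_one_mul_le_of_two_mul_le ha.le hab hq1
        gcongr
    _ ≤ _ := by linarith [Real.rpow_nonneg ha.le q]

theorem rpow_div_two_le_of_abs_le {a b s q : ℝ} (ha : 0 ≤ a) (hb : 0 ≤ b) (hs : |s| ≤ a * b)
    (hq1 : 1 ≤ q) (hq2 : q ≤ 2) :
    (a ^ 2 + 2 * s + b ^ 2) ^ (q / 2) ≤ a ^ q + q * a ^ (q - 2) * s + 2 ^ q * b ^ q := by
  have hT : 0 ≤ a ^ 2 + 2 * s + b ^ 2 := by nlinarith [neg_abs_le s, sq_nonneg (a - b)]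
  rcases ha.eq_or_lt with rfl | ha
  · obtain rfl : s = 0 := by simpa using hs
    calc ((0 : ℝ) ^ 2 + 2 * 0 + b ^ 2) ^ (q / 2) = b ^ q := by
          rw [zero_pow two_ne_zero, mul_zero, add_zero, zero_add,
            Real.rpow_div_two_eq_sqrt _ (sq_nonneg b), Real.sqrt_sq hb]
      _ ≤ 2 ^ q * b ^ q :=
          le_mul_of_one_le_left (by positivity) (Real.one_le_rpow one_le_two (by linarith))
      _ = 0 ^ q + q * 0 ^ (q - 2) * 0 + 2 ^ q * b ^ q := by
          rw [Real.zero_rpow (by linarith)]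
          ring
  rcases le_or_gt b (2 * a) with hab | hab
  · exact rpow_div_two_le_of_le_two_mul ha hb hab hq1 hq2 hT
  · exact rpow_div_two_le_of_two_mul_le ha hab.le hs hq1 hq2 hT

section InnerProductSpace

variable {E : Type*} [NormedAddCommGroup E] [InnerProductSpace ℝ E] {q : ℝ}

theorem norm_add_rpow_le (hq1 : 1 ≤ q) (hq2 : q ≤ 2) (x y : E) :
    ‖x + y‖ ^ q ≤ ‖x‖ ^ q + q * ‖x‖ ^ (q - 2) * ⟪x, y⟫_ℝ + 2 ^ q * ‖y‖ ^ q := by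
  have h := rpow_div_two_le_of_abs_le (norm_nonneg x) (norm_nonneg y)
    (abs_real_inner_le_norm x y) hq1 hq2
  rwa [← norm_add_sq_real, Real.rpow_div_two_eq_sqrt _ (sq_nonneg _),
    Real.sqrt_sq (norm_nonneg _)] at h

theorem abs_mul_rpow_mul_inner_le (hq1 : 1 ≤ q) (hq2 : q ≤ 2) (x y : E) :
    |q * ‖x‖ ^ (q - 2) * ⟪x, y⟫_ℝ| ≤ ‖x‖ ^ q + 2 ^ q * ‖y‖ ^ q := by
  have hplus := norm_add_rpow_le hq1 hq2 x y
  have hminus := norm_add_rpow_le hq1 hq2 x (-y)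
  rw [inner_neg_right, norm_neg] at hminus
  rw [abs_le]
  constructor <;> nlinarith [Real.rpow_nonneg (norm_nonneg (x + y)) q,
    Real.rpow_nonneg (norm_nonneg (x + -y)) q]

end InnerProductSpace

theorem MeasureTheory.Martingale.condExp_sub_ae_eq_zero {Ω E ι : Type*}
    {m0 : MeasurableSpace Ω} {μ : Measure Ω} [NormedAddCommGroup E] [NormedSpace ℝ E]
    [CompleteSpace E] [Preorder ι] {𝒢 : Filtration ι m0} {M : ι → Ω → E}
    (hM : Martingale M 𝒢 μ) {i j : ι} (hij : i ≤ j) :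
    μ[M j - M i|𝒢 i] =ᵐ[μ] 0 := by
  filter_upwards [condExp_sub (hM.integrable j) (hM.integrable i) (𝒢 i), hM.condExp_ae_eq hij,
    hM.condExp_ae_eq le_rfl] with ω hsub hj hi
  rw [hsub, Pi.sub_apply, hj, hi, sub_self, Pi.zero_apply]

section ConditionalExpectation

variable {Ω E : Type*} {m m0 : MeasurableSpace Ω} {μ : Measure Ω}
  [NormedAddCommGroup E] [InnerProductSpace ℝ E] [CompleteSpace E]

theorem integral_inner_eq_zero_of_condExp_eq_zero (hm : m ≤ m0) [SigmaFinite (μ.trim hm)]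
    {W D : Ω → E} (hW : StronglyMeasurable[m] W) (hWD : Integrable (fun ω => ⟪W ω, D ω⟫_ℝ) μ)
    (hD : Integrable D μ) (hcond : μ[D|m] =ᵐ[μ] 0) :
    ∫ ω, ⟪W ω, D ω⟫_ℝ ∂μ = 0 := by
  have hpull := condExp_bilin_of_stronglyMeasurable_left (innerSL ℝ) hW hWD hD
  rw [← integral_condExp hm]
  refine (integral_congr_ae (hpull.trans ?_)).trans (integral_zero Ω ℝ)
  filter_upwards [hcond] with ω hω
  simp [hω]

theorem integral_norm_add_rpow_le_of_condExp_eq_zero (hm : m ≤ m0) [SigmaFinite (μ.trim hm)]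
    {q : ℝ} (hq1 : 1 ≤ q) (hq2 : q ≤ 2) {X D : Ω → E} (hX : StronglyMeasurable[m] X)
    (hD : Integrable D μ) (hcond : μ[D|m] =ᵐ[μ] 0) (hXq : Integrable (fun ω => ‖X ω‖ ^ q) μ)
    (hDq : Integrable (fun ω => ‖D ω‖ ^ q) μ) :
    ∫ ω, ‖X ω + D ω‖ ^ q ∂μ ≤ ∫ ω, ‖X ω‖ ^ q ∂μ + 2 ^ q * ∫ ω, ‖D ω‖ ^ q ∂μ := by
  set W : Ω → E := fun ω => (q * ‖X ω‖ ^ (q - 2)) • X ω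
  have hW : StronglyMeasurable[m] W :=
    ((hX.norm.measurable.pow_const (q - 2)).const_mul q).stronglyMeasurable.smul hX
  have hG : Integrable (fun ω => ⟪W ω, D ω⟫_ℝ) μ := by
    refine (hXq.add (hDq.const_mul (2 ^ q))).mono' ?_ (ae_of_all _ fun ω => ?_)
    · exact (hW.mono hm).aestronglyMeasurable.inner hD.1
    · rw [Real.norm_eq_abs, real_inner_smul_left]
      exact abs_mul_rpow_mul_inner_le hq1 hq2 _ _
  have hG0 := integral_inner_eq_zero_of_condExp_eq_zero hm hW hG hD hcond
  simp only [W, real_inner_smul_left] at hG hG0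
  have hXG : Integrable (fun ω => ‖X ω‖ ^ q + q * ‖X ω‖ ^ (q - 2) * ⟪X ω, D ω⟫_ℝ) μ :=
    hXq.add hG
  calc ∫ ω, ‖X ω + D ω‖ ^ q ∂μ
      ≤ ∫ ω, ‖X ω‖ ^ q + q * ‖X ω‖ ^ (q - 2) * ⟪X ω, D ω⟫_ℝ + 2 ^ q * ‖D ω‖ ^ q ∂μ :=
        integral_mono_of_nonneg (ae_of_all _ fun _ => by positivity)
          (hXG.add (hDq.const_mul _)) (ae_of_all _ fun ω => norm_add_rpow_le hq1 hq2 _ _)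
    _ = ∫ ω, ‖X ω‖ ^ q ∂μ + 2 ^ q * ∫ ω, ‖D ω‖ ^ q ∂μ := by
        rw [integral_add hXG (hDq.const_mul _), integral_add hXq hG, hG0,
          integral_const_mul, add_zero]

end ConditionalExpectation

theorem martingale_qth_moment_increment_bound
    {Ω : Type*} {m0 : MeasurableSpace Ω} {P : Measure Ω} [IsProbabilityMeasure P]
    (𝒢 : Filtration ℕ m0) (M : ℕ → Ω → ℂ) (hM : Martingale M 𝒢 P)
    (q : ℝ) (hq1 : 1 ≤ q) (hq2 : q ≤ 2)
    (hint : ∀ n, Integrable (fun ω => ‖M n ω‖ ^ q) P) (n : ℕ) :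
    (∫ ω, ‖M (n + 1) ω‖ ^ q ∂P) ≤
      (∫ ω, ‖M n ω‖ ^ q ∂P) + 2 ^ q * ∫ ω, ‖M (n + 1) ω - M n ω‖ ^ q ∂P := by
  have hp : ENNReal.ofReal q ≠ 0 := (ENNReal.ofReal_pos.2 (by linarith)).ne'
  have hp_toReal : (ENNReal.ofReal q).toReal = q := ENNReal.toReal_ofReal (by linarith)
  have hLq (k : ℕ) : MemLp (M k) (ENNReal.ofReal q) P :=
    (integrable_norm_rpow_iff (hM.integrable k).1 hp ENNReal.ofReal_ne_top).1
      (by rw [hp_toReal]; exact hint k)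
  have hDq : Integrable (fun ω => ‖M (n + 1) ω - M n ω‖ ^ q) P := by
    simpa only [hp_toReal, Pi.sub_apply] using
      ((hLq (n + 1)).sub (hLq n)).integrable_norm_rpow hp ENNReal.ofReal_ne_top
  have h := integral_norm_add_rpow_le_of_condExp_eq_zero (𝒢.le n) hq1 hq2
    (hM.stronglyMeasurable n) ((hM.integrable _).sub (hM.integrable _))
    (hM.condExp_sub_ae_eq_zero n.le_succ) (hint n) hDq
  simpa only [Pi.sub_apply, add_sub_cancel] using h
end

section
/- Let (ℱ_n)_{n≥0} be a filtration and (B_n)_{n≥1} a sequence of events with B_n ∈ ℱ_n for all n. Set p_n := P(B_n | ℱ_{n−1}). Then almost surely on the event {∑_{i=1}^∞ p_i = ∞} one has (∑_{i=1}^n 1_{B_i}) / (∑_{i=1}^n p_i) → 1 as n → ∞, and almost surely on the event {∑_{i=1}^∞ p_i < ∞} the series ∑_{i=1}^∞ 1_{B_i} converges (i.e. only finitely many B_i occur). -/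
/-
Let `X_n = ∑_{k<n} 1_{B_{k+1}}`, let `A_n = ∑_{k<n} p_{k+1}` be its compensator (the predictable
part of its Doob decomposition) and `N = X - A` its martingale part. The martingale transform
`M_n = ∑_{k<n} (N_{k+1} - N_k) / (1 + A_{k+1})` is bounded in L²: the conditional variance of
its `k`-th increment is at most
`p_{k+1} (1 - p_{k+1}) / (1 + A_{k+1})² ≤ 1 / (1 + A_k) - 1 / (1 + A_{k+1})`,
so the expectation of `M_n² + 1 / (1 + A_n)` does not increase. Hence `M` converges almost
surely, and on `{A_∞ = ∞}` Kronecker's lemma turns this into `(X_n - A_n) / A_n → 0`. On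
`{A_∞ < ∞}`, Lévy's extension of the Borel–Cantelli lemma keeps the monotone process `X`
bounded, so it converges.
-/

open MeasureTheory Filter Finset Topology Asymptotics

theorem Finset.sum_Icc_one_eq_sum_range {M : Type*} [AddCommMonoid M] (g : ℕ → M) (n : ℕ) :
    ∑ i ∈ Icc 1 n, g i = ∑ k ∈ range n, g (k + 1) := by
  rw [← Ico_add_one_right_eq_Icc, sum_Ico_eq_sum_range]
  simp [add_comm]

theorem Filter.Tendsto.weighted_cesaro {w v : ℕ → ℝ} {L : ℝ} (hv : Tendsto v atTop (𝓝 L))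
    (hw : ∀ k, 0 ≤ w k) (hW : Tendsto (fun n => ∑ k ∈ range n, w k) atTop atTop) :
    Tendsto (fun n => (∑ k ∈ range n, w k * v k) / ∑ k ∈ range n, w k) atTop (𝓝 L) := by
  have hsmall : (fun k => w k * (v k - L)) =o[atTop] w := by
    simpa using (isBigO_refl w atTop).mul_isLittleO
      ((isLittleO_one_iff ℝ).2 (tendsto_sub_nhds_zero_iff.2 hv))
  have herr := ((hsmall.sum_range hw hW).tendsto_div_nhds_zero).const_add L
  rw [add_zero] at herr
  refine herr.congr' ?_
  filter_upwards [hW.eventually_gt_atTop 0] with n hn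
  simp only [mul_sub, sum_sub_distrib, ← sum_mul]
  field_simp
  ring

theorem Filter.Tendsto.kronecker {b x : ℕ → ℝ} {L : ℝ}
    (h : Tendsto (fun n => ∑ k ∈ range n, x k / b k) atTop (𝓝 L))
    (hb : Monotone b) (hb0 : ∀ n, 0 < b n) (hbt : Tendsto b atTop atTop) :
    Tendsto (fun n => (∑ k ∈ range (n + 1), x k) / b n) atTop (𝓝 0) := by
  set u := fun n => ∑ k ∈ range n, x k / b k
  have habel : ∀ n, ∑ k ∈ range (n + 1), x k =
      b n * u (n + 1) - ∑ k ∈ range n, (b (k + 1) - b k) * u (k + 1) := by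
    intro n
    have := sum_range_by_parts b (fun k => x k / b k) (n + 1)
    simp only [smul_eq_mul, add_tsub_cancel_right] at this
    rw [← this]
    exact sum_congr rfl fun k _ => (mul_div_cancel₀ _ (hb0 k).ne').symm
  have hW : Tendsto (fun n => ∑ k ∈ range n, (b (k + 1) - b k)) atTop atTop := by
    simp_rw [sum_range_sub]
    exact tendsto_atTop_add_const_right _ _ hbt
  have hu := h.comp (tendsto_add_atTop_nat 1)
  have havg := hu.weighted_cesaro (fun k => sub_nonneg.2 (hb k.le_succ)) hW
  have hratio : Tendsto (fun n => (∑ k ∈ range n, (b (k + 1) - b k)) / b n) atTop (𝓝 1) := by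
    have := (tendsto_const_nhds (x := (1 : ℝ))).sub ((tendsto_const_nhds (x := b 0)).div_atTop hbt)
    rw [sub_zero] at this
    refine this.congr fun n => ?_
    rw [sum_range_sub, sub_div, div_self (hb0 n).ne']
  have := hu.sub (havg.mul hratio)
  rw [mul_one, sub_self] at this
  refine this.congr' ?_
  filter_upwards [hW.eventually_gt_atTop 0] with n hn
  rw [habel, sub_div, mul_div_cancel_left₀ _ (hb0 n).ne', div_mul_div_cancel₀ hn.ne']
  rfl

theorem tendsto_div_of_tendsto_sum_inv_mul_sub {X A : ℕ → ℝ} {L : ℝ} (hA : Monotone A)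
    (hA0 : 0 ≤ A 0) (hAt : Tendsto A atTop atTop)
    (h : Tendsto (fun n =>
      ∑ k ∈ range n, (1 + A (k + 1))⁻¹ * (X (k + 1) - A (k + 1) - (X k - A k))) atTop (𝓝 L)) :
    Tendsto (fun n => X n / A n) atTop (𝓝 1) := by
  have hb0 : ∀ n, 0 < 1 + A (n + 1) := fun n => by linarith [hA (Nat.zero_le (n + 1))]
  have hK := (h.congr fun n => sum_congr rfl fun k _ => inv_mul_eq_div _ _).kronecker
    (fun m n hmn => by simpa using hA (Nat.succ_le_succ hmn)) hb0
    (tendsto_atTop_add_const_left _ 1 (hAt.comp (tendsto_add_atTop_nat 1)))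
  simp only [sum_range_sub (fun n => X n - A n)] at hK
  have hK' : Tendsto (fun n => (X n - A n - (X 0 - A 0)) / (1 + A n)) atTop (𝓝 0) :=
    (tendsto_add_atTop_iff_nat 1).1 hK
  have hinv : Tendsto (fun n => (A n)⁻¹) atTop (𝓝 0) := tendsto_inv_atTop_zero.comp hAt
  have := (hK'.mul ((hinv.const_add 1))).add (hinv.const_mul (X 0 - A 0))
  rw [zero_mul, zero_add, mul_zero] at this
  have := this.const_add 1
  rw [add_zero] at this
  refine this.congr' ?_
  filter_upwards [hAt.eventually_gt_atTop 0] with n hn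
  have : 0 < 1 + A n := by linarith
  field_simp
  ring

/-- One step of the supermartingale `M² + (1 + A)⁻¹`: `a, a'` are consecutive values of the
compensator and `x, x'` of the process; the error term is a coefficient known at time `n` times the
martingale increment `x' - a' - (x - a)`. -/
theorem sq_add_inv_le_add_mul {m a a' x x' : ℝ} (ha : 0 ≤ a) (hq : a' - a ∈ Set.Icc (0 : ℝ) 1)
    (hx : x' - x ∈ Set.Icc (0 : ℝ) 1) :
    (m + (1 + a')⁻¹ * (x' - a' - (x - a))) ^ 2 + (1 + a')⁻¹ ≤
      m ^ 2 + (1 + a)⁻¹ +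
        (2 * m * (1 + a')⁻¹ + (1 + a')⁻¹ ^ 2 * (1 - 2 * (a' - a))) * (x' - a' - (x - a)) := by
  obtain ⟨hq₀, hq₁⟩ := hq
  obtain ⟨hx₀, hx₁⟩ := hx
  have h₁ : 0 < 1 + a := by linarith
  have h₂ : 0 < 1 + a' := by linarith
  have hgap : 0 ≤ (a' - a) ^ 2 * (2 + a) + (x' - x) * (1 - (x' - x)) * (1 + a) := by
    have := mul_nonneg hx₀ (sub_nonneg.2 hx₁)
    positivity
  have key : m ^ 2 + (1 + a)⁻¹ +
        (2 * m * (1 + a')⁻¹ + (1 + a')⁻¹ ^ 2 * (1 - 2 * (a' - a))) * (x' - a' - (x - a)) -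
      ((m + (1 + a')⁻¹ * (x' - a' - (x - a))) ^ 2 + (1 + a')⁻¹) =
      ((a' - a) ^ 2 * (2 + a) + (x' - x) * (1 - (x' - x)) * (1 + a)) /
        ((1 + a) * (1 + a') ^ 2) := by
    field_simp
    ring
  rw [← sub_nonneg, key]
  positivity

namespace MeasureTheory

variable {Ω : Type*} {m0 : MeasurableSpace Ω} {f : ℕ → Ω → ℝ} {ℱ : Filtration ℕ m0}
  {μ : Measure Ω} [IsFiniteMeasure μ]

theorem Martingale.condExp_mul_sub_ae_eq_zero (hf : Martingale f ℱ μ) {g : Ω → ℝ} {n : ℕ}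
    (hg : StronglyMeasurable[ℱ n] g) (hgf : Integrable (g * (f (n + 1) - f n)) μ) :
    μ[g * (f (n + 1) - f n) | ℱ n] =ᵐ[μ] 0 := by
  filter_upwards [condExp_mul_of_stronglyMeasurable_left hg hgf
      ((hf.integrable _).sub (hf.integrable _)),
    condExp_sub (hf.integrable (n + 1)) (hf.integrable n) (ℱ n),
    hf.condExp_ae_eq n.le_succ] with ω h₁ h₂ h₃
  rw [h₁, Pi.mul_apply, h₂, Pi.sub_apply, h₃,
    condExp_of_stronglyMeasurable (ℱ.le n) (hf.stronglyAdapted n) (hf.integrable n)]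
  simp

theorem Martingale.integral_mul_sub_eq_zero (hf : Martingale f ℱ μ) {g : Ω → ℝ} {n : ℕ}
    (hg : StronglyMeasurable[ℱ n] g) (hgf : Integrable (g * (f (n + 1) - f n)) μ) :
    ∫ ω, g ω * (f (n + 1) ω - f n ω) ∂μ = 0 := by
  rw [← integral_condExp (ℱ.le n)]
  exact integral_eq_zero_of_ae (hf.condExp_mul_sub_ae_eq_zero hg hgf)

theorem Martingale.sum_mul_sub {ξ : ℕ → Ω → ℝ} {R : ℝ} (hf : Martingale f ℱ μ)
    (hξ : StronglyAdapted ℱ ξ) (hbdd : ∀ n, ∀ᵐ ω ∂μ, |ξ n ω| ≤ R) :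
    Martingale (fun n => ∑ k ∈ range n, ξ k * (f (k + 1) - f k)) ℱ μ := by
  have hint : ∀ k, Integrable (ξ k * (f (k + 1) - f k)) μ := fun k =>
    ((hf.integrable _).sub (hf.integrable _)).bdd_mul
      ((hξ k).mono (ℱ.le k)).aestronglyMeasurable (hbdd k)
  refine martingale_of_condExp_sub_eq_zero_nat (fun n => ?_)
    (fun n => integrable_finsetSum' _ fun k _ => hint k) fun n => ?_
  · exact Finset.stronglyMeasurable_sum _ fun k hk =>
      ((hξ k).mono (ℱ.mono (mem_range.1 hk).le)).mul
        (((hf.stronglyAdapted _).mono (ℱ.mono (mem_range.1 hk))).sub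
          ((hf.stronglyAdapted _).mono (ℱ.mono (mem_range.1 hk).le)))
  · simpa only [sum_range_succ_sub_sum] using hf.condExp_mul_sub_ae_eq_zero (hξ n) (hint n)

theorem ae_forall_predictablePart_sub_mem_Icc (ℱ : Filtration ℕ m0)
    (hint : ∀ n, Integrable (f n) μ)
    (hinc : ∀ᵐ ω ∂μ, ∀ n, f (n + 1) ω - f n ω ∈ Set.Icc (0 : ℝ) 1) :
    ∀ᵐ ω ∂μ, ∀ n,
      predictablePart f ℱ μ (n + 1) ω - predictablePart f ℱ μ n ω ∈ Set.Icc (0 : ℝ) 1 := by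
  simp only [predictablePart_add_one, Pi.add_apply, add_sub_cancel_left]
  refine ae_all_iff.2 fun n => ?_
  have hΔ := ae_all_iff.1 hinc n
  have h₀ : 0 ≤ᵐ[μ] μ[f (n + 1) - f n | ℱ n] := condExp_nonneg (hΔ.mono fun ω h => h.1)
  have h₁ := condExp_mono (m := ℱ n) ((hint _).sub (hint _)) (integrable_const (1 : ℝ))
    (hΔ.mono fun ω h => h.2)
  rw [condExp_const (ℱ.le n)] at h₁
  filter_upwards [h₀, h₁] with ω h₀ h₁ using ⟨h₀, h₁⟩

theorem ae_monotone_predictablePart (ℱ : Filtration ℕ m0) (hint : ∀ n, Integrable (f n) μ)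
    (hinc : ∀ᵐ ω ∂μ, ∀ n, f (n + 1) ω - f n ω ∈ Set.Icc (0 : ℝ) 1) :
    ∀ᵐ ω ∂μ, Monotone (predictablePart f ℱ μ · ω) := by
  filter_upwards [ae_forall_predictablePart_sub_mem_Icc ℱ hint hinc] with ω h
  exact monotone_nat_of_le_succ fun n => sub_nonneg.1 (h n).1

theorem ae_forall_predictablePart_nonneg (ℱ : Filtration ℕ m0) (hint : ∀ n, Integrable (f n) μ)
    (hinc : ∀ᵐ ω ∂μ, ∀ n, f (n + 1) ω - f n ω ∈ Set.Icc (0 : ℝ) 1) :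
    ∀ᵐ ω ∂μ, ∀ n, 0 ≤ predictablePart f ℱ μ n ω := by
  filter_upwards [ae_monotone_predictablePart ℱ hint hinc] with ω h n
  simpa using h n.zero_le

variable (f ℱ μ) in
noncomputable def normalizedMartingalePart (n : ℕ) : Ω → ℝ :=
  ∑ k ∈ range n, (fun ω => (1 + predictablePart f ℱ μ (k + 1) ω)⁻¹) *
    (martingalePart f ℱ μ (k + 1) - martingalePart f ℱ μ k)

theorem martingale_normalizedMartingalePart (hf : StronglyAdapted ℱ f)
    (hint : ∀ n, Integrable (f n) μ)
    (hinc : ∀ᵐ ω ∂μ, ∀ n, f (n + 1) ω - f n ω ∈ Set.Icc (0 : ℝ) 1) :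
    Martingale (normalizedMartingalePart f ℱ μ) ℱ μ := by
  refine (martingale_martingalePart hf hint).sum_mul_sub (R := 1)
    (fun k => (measurable_const.add (stronglyAdapted_predictablePart k).measurable).inv
      |>.stronglyMeasurable) fun k => ?_
  filter_upwards [ae_forall_predictablePart_nonneg ℱ hint hinc] with ω h
  rw [abs_inv, inv_le_one₀ (abs_pos.2 (by linarith [h (k + 1)]))]
  exact (le_abs_self _).trans' (by linarith [h (k + 1)])

theorem ae_forall_abs_normalizedMartingalePart_le (ℱ : Filtration ℕ m0)
    (hint : ∀ n, Integrable (f n) μ)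
    (hinc : ∀ᵐ ω ∂μ, ∀ n, f (n + 1) ω - f n ω ∈ Set.Icc (0 : ℝ) 1) :
    ∀ᵐ ω ∂μ, ∀ n, |normalizedMartingalePart f ℱ μ n ω| ≤ n := by
  filter_upwards [hinc, ae_forall_predictablePart_sub_mem_Icc ℱ hint hinc,
    ae_forall_predictablePart_nonneg ℱ hint hinc] with ω hΔ hq hA n
  have hterm : ∀ k, |(1 + predictablePart f ℱ μ (k + 1) ω)⁻¹ *
      (martingalePart f ℱ μ (k + 1) ω - martingalePart f ℱ μ k ω)| ≤ 1 := fun k => by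
    have := hA (k + 1)
    simp only [martingalePart, Pi.sub_apply]
    rw [abs_mul, abs_inv, abs_of_pos (by linarith), inv_mul_le_iff₀ (by linarith), abs_le]
    constructor <;> linarith [(hΔ k).1, (hΔ k).2, (hq k).1, (hq k).2]
  calc |normalizedMartingalePart f ℱ μ n ω|
      ≤ ∑ k ∈ range n, |(1 + predictablePart f ℱ μ (k + 1) ω)⁻¹ *
          (martingalePart f ℱ μ (k + 1) ω - martingalePart f ℱ μ k ω)| := by
        rw [normalizedMartingalePart, Finset.sum_apply]; exact abs_sum_le_sum_abs _ _
    _ ≤ ∑ _k ∈ range n, (1 : ℝ) := sum_le_sum fun k _ => hterm k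
    _ = n := by simp

theorem integrable_normalizedMartingalePart_sq_add_inv (hf : StronglyAdapted ℱ f)
    (hint : ∀ n, Integrable (f n) μ)
    (hinc : ∀ᵐ ω ∂μ, ∀ n, f (n + 1) ω - f n ω ∈ Set.Icc (0 : ℝ) 1) (n : ℕ) :
    Integrable (fun ω => normalizedMartingalePart f ℱ μ n ω ^ 2 +
      (1 + predictablePart f ℱ μ n ω)⁻¹) μ := by
  have hM := ((martingale_normalizedMartingalePart hf hint hinc).integrable n).aemeasurable
  have hA := ((stronglyAdapted_predictablePart' (μ := μ) (f := f) n).mono (ℱ.le n)).measurable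
  refine .of_bound (AEMeasurable.aestronglyMeasurable (by fun_prop)) (n ^ 2 + 1) ?_
  filter_upwards [ae_forall_abs_normalizedMartingalePart_le ℱ hint hinc,
    ae_forall_predictablePart_nonneg ℱ hint hinc] with ω hM hA
  have h₁ : (1 + predictablePart f ℱ μ n ω)⁻¹ ≤ 1 := inv_le_one_of_one_le₀ (by linarith [hA n])
  have h₂ : 0 ≤ (1 + predictablePart f ℱ μ n ω)⁻¹ := inv_nonneg.2 (by linarith [hA n])
  rw [Real.norm_of_nonneg (by positivity)]
  nlinarith [sq_abs (normalizedMartingalePart f ℱ μ n ω),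
    abs_nonneg (normalizedMartingalePart f ℱ μ n ω), hM n]

theorem integral_normalizedMartingalePart_sq_add_inv_succ_le (hf : StronglyAdapted ℱ f)
    (hint : ∀ n, Integrable (f n) μ)
    (hinc : ∀ᵐ ω ∂μ, ∀ n, f (n + 1) ω - f n ω ∈ Set.Icc (0 : ℝ) 1) (n : ℕ) :
    ∫ ω, (normalizedMartingalePart f ℱ μ (n + 1) ω ^ 2 +
        (1 + predictablePart f ℱ μ (n + 1) ω)⁻¹) ∂μ ≤
      ∫ ω, (normalizedMartingalePart f ℱ μ n ω ^ 2 + (1 + predictablePart f ℱ μ n ω)⁻¹) ∂μ := by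
  set M := normalizedMartingalePart f ℱ μ
  set A := predictablePart f ℱ μ
  set N := martingalePart f ℱ μ
  set g : Ω → ℝ := fun ω =>
    2 * M n ω * (1 + A (n + 1) ω)⁻¹ + (1 + A (n + 1) ω)⁻¹ ^ 2 * (1 - 2 * (A (n + 1) ω - A n ω))
  have hg : StronglyMeasurable[ℱ n] g := by
    have := ((martingale_normalizedMartingalePart hf hint hinc).stronglyAdapted n).measurable
    have := (stronglyAdapted_predictablePart (ℱ := ℱ) (μ := μ) (f := f) n).measurable
    have := (stronglyAdapted_predictablePart' (ℱ := ℱ) (μ := μ) (f := f) n).measurable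
    exact Measurable.stronglyMeasurable (by fun_prop)
  have hgN : Integrable (fun ω => g ω * (N (n + 1) ω - N n ω)) μ := by
    refine ((integrable_martingalePart hint _).sub (integrable_martingalePart hint _)).bdd_mul
      (hg.mono (ℱ.le n)).aestronglyMeasurable (c := 2 * n + 1) ?_
    filter_upwards [ae_forall_abs_normalizedMartingalePart_le ℱ hint hinc,
      ae_forall_predictablePart_sub_mem_Icc ℱ hint hinc,
      ae_forall_predictablePart_nonneg ℱ hint hinc] with ω hM hq hA
    have hc₀ : 0 ≤ (1 + A (n + 1) ω)⁻¹ := inv_nonneg.2 (by linarith [hA (n + 1)])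
    have hc₁ : (1 + A (n + 1) ω)⁻¹ ≤ 1 := inv_le_one_of_one_le₀ (by linarith [hA (n + 1)])
    rw [Real.norm_eq_abs, abs_le]
    obtain ⟨hM₁, hM₂⟩ := abs_le.1 (hM n)
    constructor <;> nlinarith [(hq n).1, (hq n).2, mul_le_mul_of_nonneg_left hc₁ hc₀]
  have hstep : ∀ᵐ ω ∂μ, M (n + 1) ω ^ 2 + (1 + A (n + 1) ω)⁻¹ ≤
      M n ω ^ 2 + (1 + A n ω)⁻¹ + g ω * (N (n + 1) ω - N n ω) := by
    filter_upwards [hinc, ae_forall_predictablePart_sub_mem_Icc ℱ hint hinc,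
      ae_forall_predictablePart_nonneg ℱ hint hinc] with ω hΔ hq hA
    have hM : M (n + 1) ω = M n ω + (1 + A (n + 1) ω)⁻¹ * (N (n + 1) ω - N n ω) := by
      simp only [M, normalizedMartingalePart, sum_range_succ]
      rfl
    rw [hM]
    exact sq_add_inv_le_add_mul (hA n) (hq n) (hΔ n)
  calc _ ≤ ∫ ω, (M n ω ^ 2 + (1 + A n ω)⁻¹ + g ω * (N (n + 1) ω - N n ω)) ∂μ :=
        integral_mono_ae (integrable_normalizedMartingalePart_sq_add_inv hf hint hinc _)
          ((integrable_normalizedMartingalePart_sq_add_inv hf hint hinc n).add hgN) hstep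
    _ = _ := by
        rw [integral_add (integrable_normalizedMartingalePart_sq_add_inv hf hint hinc n) hgN,
          (martingale_martingalePart hf hint).integral_mul_sub_eq_zero hg hgN, add_zero]

theorem integral_normalizedMartingalePart_sq_add_inv_le (hf : StronglyAdapted ℱ f)
    (hint : ∀ n, Integrable (f n) μ)
    (hinc : ∀ᵐ ω ∂μ, ∀ n, f (n + 1) ω - f n ω ∈ Set.Icc (0 : ℝ) 1) (n : ℕ) :
    ∫ ω, (normalizedMartingalePart f ℱ μ n ω ^ 2 + (1 + predictablePart f ℱ μ n ω)⁻¹) ∂μ ≤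
      μ.real Set.univ := by
  induction n with
  | zero => simp [normalizedMartingalePart]
  | succ n ih =>
    exact (integral_normalizedMartingalePart_sq_add_inv_succ_le hf hint hinc n).trans ih

theorem eLpNorm_normalizedMartingalePart_le (hf : StronglyAdapted ℱ f)
    (hint : ∀ n, Integrable (f n) μ)
    (hinc : ∀ᵐ ω ∂μ, ∀ n, f (n + 1) ω - f n ω ∈ Set.Icc (0 : ℝ) 1) (n : ℕ) :
    eLpNorm (normalizedMartingalePart f ℱ μ n) 1 μ ≤ ENNReal.ofReal (2 * μ.real Set.univ) := by
  have hM := (martingale_normalizedMartingalePart hf hint hinc).integrable n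
  have hY := integrable_normalizedMartingalePart_sq_add_inv hf hint hinc n
  rw [eLpNorm_one_eq_lintegral_enorm, ← ofReal_integral_norm_eq_lintegral_enorm hM]
  refine ENNReal.ofReal_le_ofReal ?_
  calc ∫ ω, ‖normalizedMartingalePart f ℱ μ n ω‖ ∂μ
      ≤ ∫ ω, (1 + (normalizedMartingalePart f ℱ μ n ω ^ 2 +
          (1 + predictablePart f ℱ μ n ω)⁻¹)) ∂μ := by
        refine integral_mono_ae hM.norm ((integrable_const 1).add hY) ?_
        filter_upwards [ae_forall_predictablePart_nonneg ℱ hint hinc] with ω hA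
        have : 0 ≤ (1 + predictablePart f ℱ μ n ω)⁻¹ := inv_nonneg.2 (by linarith [hA n])
        rw [Real.norm_eq_abs]
        nlinarith [sq_nonneg (|normalizedMartingalePart f ℱ μ n ω| - 1),
          sq_abs (normalizedMartingalePart f ℱ μ n ω)]
    _ = μ.real Set.univ + ∫ ω, (normalizedMartingalePart f ℱ μ n ω ^ 2 +
          (1 + predictablePart f ℱ μ n ω)⁻¹) ∂μ := by
        rw [integral_add (integrable_const 1) hY, integral_const, smul_eq_mul, mul_one]
    _ ≤ 2 * μ.real Set.univ := by
        linarith [integral_normalizedMartingalePart_sq_add_inv_le hf hint hinc n]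

theorem ae_exists_tendsto_normalizedMartingalePart (hf : StronglyAdapted ℱ f)
    (hint : ∀ n, Integrable (f n) μ)
    (hinc : ∀ᵐ ω ∂μ, ∀ n, f (n + 1) ω - f n ω ∈ Set.Icc (0 : ℝ) 1) :
    ∀ᵐ ω ∂μ, ∃ L, Tendsto (fun n => normalizedMartingalePart f ℱ μ n ω) atTop (𝓝 L) :=
  (martingale_normalizedMartingalePart hf hint hinc).submartingale.exists_ae_tendsto_of_bdd
    (R := (2 * μ.real Set.univ).toNNReal) (eLpNorm_normalizedMartingalePart_le hf hint hinc)

theorem ae_tendsto_div_predictablePart (hf : StronglyAdapted ℱ f)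
    (hint : ∀ n, Integrable (f n) μ)
    (hinc : ∀ᵐ ω ∂μ, ∀ n, f (n + 1) ω - f n ω ∈ Set.Icc (0 : ℝ) 1) :
    ∀ᵐ ω ∂μ, Tendsto (fun n => predictablePart f ℱ μ n ω) atTop atTop →
      Tendsto (fun n => f n ω / predictablePart f ℱ μ n ω) atTop (𝓝 1) := by
  filter_upwards [ae_exists_tendsto_normalizedMartingalePart hf hint hinc,
    ae_monotone_predictablePart ℱ hint hinc] with ω ⟨L, hL⟩ hmono hA
  refine tendsto_div_of_tendsto_sum_inv_mul_sub hmono (by simp) hA (L := L) ?_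
  simpa [normalizedMartingalePart, martingalePart] using hL

theorem ae_exists_tendsto_of_not_tendsto_predictablePart (hf : StronglyAdapted ℱ f)
    (hint : ∀ n, Integrable (f n) μ)
    (hinc : ∀ᵐ ω ∂μ, ∀ n, f (n + 1) ω - f n ω ∈ Set.Icc (0 : ℝ) 1) :
    ∀ᵐ ω ∂μ, ¬Tendsto (fun n => predictablePart f ℱ μ n ω) atTop atTop →
      ∃ L, Tendsto (fun n => f n ω) atTop (𝓝 L) := by
  have hmono : ∀ᵐ ω ∂μ, ∀ n, f n ω ≤ f (n + 1) ω :=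
    hinc.mono fun ω h n => sub_nonneg.1 (h n).1
  have hbdd : ∀ᵐ ω ∂μ, ∀ n, |f (n + 1) ω - f n ω| ≤ 1 :=
    hinc.mono fun ω h n => abs_le.2 ⟨by linarith [(h n).1], (h n).2⟩
  filter_upwards [tendsto_sum_indicator_atTop_iff (R := 1) hmono hf hint (by simpa using hbdd),
    hmono] with ω hiff hω hA
  obtain htop | hL := tendsto_atTop_of_monotone (monotone_nat_of_le_succ hω)
  · exact absurd (hiff.1 htop) hA
  · exact hL

namespace BorelCantelli

variable {s : ℕ → Set Ω}

theorem stronglyAdapted_process' (hs : ∀ n, MeasurableSet[ℱ (n + 1)] (s (n + 1))) :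
    StronglyAdapted ℱ (process s) := fun _ =>
  Finset.stronglyMeasurable_sum _ fun _ hk =>
    stronglyMeasurable_one.indicator (ℱ.mono (mem_range.1 hk) _ (hs _))

theorem integrable_process' (μ : Measure Ω) [IsFiniteMeasure μ]
    (hs : ∀ n, MeasurableSet[ℱ (n + 1)] (s (n + 1))) (n : ℕ) : Integrable (process s n) μ :=
  integrable_finsetSum' _ fun _ _ => (integrable_const 1).indicator (ℱ.le _ _ (hs _))

theorem process_succ_sub_mem_Icc (s : ℕ → Set Ω) (n : ℕ) (ω : Ω) :
    process s (n + 1) ω - process s n ω ∈ Set.Icc (0 : ℝ) 1 := by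
  rw [process, process, Finset.sum_apply, Finset.sum_apply, sum_range_succ_sub_sum]
  by_cases h : ω ∈ s (n + 1) <;> simp [h]

end BorelCantelli

end MeasureTheory

theorem conditional_borel_cantelli
    {Ω : Type*} {m0 : MeasurableSpace Ω} (P : Measure Ω) [IsProbabilityMeasure P]
    (ℱ : Filtration ℕ m0) (B : ℕ → Set Ω) (hB : ∀ n, 1 ≤ n → MeasurableSet[ℱ n] (B n))
    (p : ℕ → Ω → ℝ)
    (hp : ∀ n, 1 ≤ n → p n = P[(B n).indicator (fun _ => (1:ℝ)) | ℱ (n - 1)]) :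
    ∀ᵐ ω ∂P,
      (¬ Summable (fun i => p (i + 1) ω) →
        Tendsto (fun n => (∑ i ∈ Finset.Icc 1 n, (B i).indicator (fun _ => (1:ℝ)) ω) /
          (∑ i ∈ Finset.Icc 1 n, p i ω)) atTop (nhds 1)) ∧
      (Summable (fun i => p (i + 1) ω) →
        ∃ L, Tendsto (fun n => ∑ i ∈ Finset.Icc 1 n, (B i).indicator (fun _ => (1:ℝ)) ω)
          atTop (nhds L)) := by
  set X := BorelCantelli.process B
  have hs : ∀ n, MeasurableSet[ℱ (n + 1)] (B (n + 1)) := fun n => hB _ n.succ_pos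
  have hX := BorelCantelli.stronglyAdapted_process' hs
  have hXint := BorelCantelli.integrable_process' P hs
  have hXinc := ae_of_all P fun ω n => BorelCantelli.process_succ_sub_mem_Icc B n ω
  have hXsum : ∀ n ω, ∑ i ∈ Icc 1 n, (B i).indicator (fun _ => (1 : ℝ)) ω = X n ω := fun n ω => by
    rw [sum_Icc_one_eq_sum_range, ← Finset.sum_apply]
    rfl
  have hA : ∀ n ω, ∑ i ∈ Icc 1 n, p i ω = predictablePart X ℱ P n ω := fun n ω => by
    rw [sum_Icc_one_eq_sum_range, BorelCantelli.predictablePart_process_ae_eq, Finset.sum_apply]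
    exact sum_congr rfl fun k _ => by simp [hp (k + 1) k.succ_pos]; rfl
  have hp0 : ∀ᵐ ω ∂P, ∀ i, 0 ≤ p (i + 1) ω := ae_all_iff.2 fun i => by
    rw [hp _ i.succ_pos]
    exact condExp_nonneg (ae_of_all _ fun ω => Set.indicator_nonneg (fun _ _ => zero_le_one) ω)
  filter_upwards [ae_tendsto_div_predictablePart hX hXint hXinc,
    ae_exists_tendsto_of_not_tendsto_predictablePart hX hXint hXinc, hp0] with ω hdiv hconv hpω
  have hsum : Summable (fun i => p (i + 1) ω) ↔
      ¬Tendsto (fun n => predictablePart X ℱ P n ω) atTop atTop := by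
    rw [show (fun n => predictablePart X ℱ P n ω) = fun n => ∑ k ∈ range n, p (k + 1) ω
      from funext fun n => by rw [← hA, sum_Icc_one_eq_sum_range]]
    exact summable_iff_not_tendsto_nat_atTop_of_nonneg hpω
  simp only [hXsum, hA]
  exact ⟨fun h => hdiv (by_contra fun h' => h (hsum.2 h')), fun h => hconv (hsum.1 h)⟩
end

section
/- Let (w_n)_{n≥1} be a sequence of non-negative reals with w_1 > 0, set W_n = ∑_{i=1}^n w_i, and suppose there exist constants C > 0, γ > 0, ε ∈ (0,1) such that W_n = C n^γ (1 + O(n^{−ε})). Then there exists ε' > 0 such that ∑_{i=n}^∞ (w_i/W_i)² = O(n^{−ε'}) and there exists a constant c such that ∑_{i=2}^n w_i/W_i = γ log n + c + O(n^{−ε'}) as n → ∞. -/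
/-!
Write `x n = w n / W n`. Since `1 - x (n + 1) = W n / W (n + 1)`, we have
`x (n + 1) ≤ log W (n + 1) - log W n = γ log (1 + 1 / n) + O(n ^ (-ε))`, so `x n = O(n ^ (-ε))`
once `ε` is replaced by `min ε 1`. On a dyadic block `[n, 2n)` the `x i` sum to at most
`W (2n) / W n = O(1)`, so their squares sum to `O(n ^ (-ε))`, and the blocks beyond `n` form a
geometric series. Finally `x i = log W i - log W (i - 1) - r i` with `r i = O(x i ^ 2)` summable,
so the partial sums telescope to `log W n` minus a convergent series, which is
`γ log n + c + O(n ^ (-ε))`.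
-/

open Filter Asymptotics Topology

lemma isBigO_natCast_rpow_of_le {a b : ℝ} (hab : a ≤ b) :
    (fun n : ℕ => (n : ℝ) ^ a) =O[atTop] (fun n : ℕ => (n : ℝ) ^ b) :=
  IsBigO.of_bound 1 <| (eventually_ge_atTop 1).mono fun n hn => by
    rw [Real.norm_of_nonneg (by positivity), Real.norm_of_nonneg (by positivity), one_mul]
    exact Real.rpow_le_rpow_of_exponent_le (by exact_mod_cast hn) hab

lemma tendsto_natCast_rpow_neg_atTop {ε : ℝ} (hε : 0 < ε) :
    Tendsto (fun n : ℕ => (n : ℝ) ^ (-ε)) atTop (𝓝 0) :=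
  (tendsto_rpow_neg_atTop hε).comp tendsto_natCast_atTop_atTop

lemma isBigO_natCast_rpow_comp_add_one_iff {f : ℕ → ℝ} {a : ℝ} :
    (fun n => f (n + 1)) =O[atTop] (fun n : ℕ => (n : ℝ) ^ a) ↔
      f =O[atTop] (fun n : ℕ => (n : ℝ) ^ a) := by
  have hequiv : (fun n : ℕ => ((n + 1 : ℕ) : ℝ)) ~[atTop] (fun n : ℕ => (n : ℝ)) := by
    push_cast
    exact IsEquivalent.refl.add_const_of_norm_tendsto_atTop
      (tendsto_norm_atTop_atTop.comp tendsto_natCast_atTop_atTop)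
  have htheta : (fun n : ℕ => ((n + 1 : ℕ) : ℝ) ^ a) =Θ[atTop] (fun n : ℕ => (n : ℝ) ^ a) :=
    (hequiv.rpow (fun n => n.cast_nonneg) (r := a)).isTheta
  conv_rhs => rw [← map_add_atTop_eq_nat 1, isBigO_map]
  exact htheta.isBigO_congr_right.symm

lemma isBigO_log_natCast_add_one_sub_log :
    (fun n : ℕ => Real.log (n + 1) - Real.log n)
      =O[atTop] (fun n : ℕ => (n : ℝ) ^ (-1 : ℝ)) := by
  refine IsBigO.of_bound' ((eventually_ge_atTop 1).mono fun n hn => ?_)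
  have hn : (0 : ℝ) < n := by exact_mod_cast hn
  rw [← Real.log_div (by positivity) hn.ne', Real.rpow_neg_one,
    Real.norm_of_nonneg (Real.log_nonneg (by rw [le_div_iff₀ hn]; linarith)),
    Real.norm_of_nonneg (by positivity)]
  calc Real.log ((n + 1) / n) ≤ (n + 1) / n - 1 := Real.log_le_sub_one_of_pos (by positivity)
    _ = (n : ℝ)⁻¹ := by field_simp; ring

lemma isBigO_add_log_one_sub_sq :
    (fun t : ℝ => t + Real.log (1 - t)) =O[𝓝 0] (fun t => t ^ 2) := by
  refine IsBigO.of_bound 2 ?_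
  filter_upwards [Metric.ball_mem_nhds (0 : ℝ) (by norm_num : (0:ℝ) < 1 / 2)] with t ht
  rw [Metric.mem_ball, dist_zero_right, Real.norm_eq_abs] at ht
  have h := Real.abs_log_sub_add_sum_range_le (ht.trans (by norm_num)) 1
  simp only [Finset.sum_range_one, pow_one, Nat.cast_zero, zero_add, div_one] at h
  rw [Real.norm_eq_abs, Real.norm_eq_abs, abs_pow, sq_abs]
  calc |t + Real.log (1 - t)| ≤ |t| ^ 2 / (1 - |t|) := h
    _ ≤ |t| ^ 2 / (1 / 2) := by gcongr; linarith
    _ = 2 * t ^ 2 := by rw [sq_abs]; ring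

lemma Asymptotics.IsBigO.log_of_sub_one {α : Type*} {l : Filter α} {p g : α → ℝ}
    (h : (fun a => p a - 1) =O[l] g) (hg : Tendsto g l (𝓝 0)) :
    (fun a => Real.log (p a)) =O[l] g := by
  have hp : Tendsto p l (𝓝 1) := by simpa using (h.trans_tendsto hg).add_const 1
  simpa [Function.comp_def] using
    ((Real.hasDerivAt_log one_ne_zero).isBigO_sub.comp_tendsto hp).trans h

lemma isBigO_log_sub_of_isBigO_div_sub_one {W : ℕ → ℝ} {C γ ε : ℝ} (hC : 0 < C) (hε : 0 < ε)
    (h : (fun n : ℕ => W n / (C * (n : ℝ) ^ γ) - 1) =O[atTop] (fun n : ℕ => (n : ℝ) ^ (-ε))) :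
    (fun n : ℕ => Real.log (W n) - (γ * Real.log n + Real.log C))
      =O[atTop] (fun n : ℕ => (n : ℝ) ^ (-ε)) := by
  have hp : Tendsto (fun n : ℕ => W n / (C * (n : ℝ) ^ γ)) atTop (𝓝 1) := by
    simpa using (h.trans_tendsto (tendsto_natCast_rpow_neg_atTop hε)).add_const 1
  refine (h.log_of_sub_one (tendsto_natCast_rpow_neg_atTop hε)).congr' ?_ EventuallyEq.rfl
  filter_upwards [eventually_ge_atTop 1, hp.eventually_ne one_ne_zero] with n hn hpn
  have hn : (0 : ℝ) < n := by exact_mod_cast hn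
  rw [Real.log_div (div_ne_zero_iff.mp hpn).1 (by positivity),
    Real.log_mul hC.ne' (by positivity), Real.log_rpow hn]
  ring

lemma Asymptotics.IsBigO.tsum_nat_add {f g : ℕ → ℝ} (h : f =O[atTop] g) (hg : Summable g) :
    (fun n => ∑' i, f (i + n)) =O[atTop] (fun n => ∑' i, ‖g (i + n)‖) := by
  obtain ⟨c, hc⟩ := h.bound
  obtain ⟨N, hN⟩ := eventually_atTop.mp hc
  refine IsBigO.of_bound c ((eventually_ge_atTop N).mono fun n hn => ?_)
  have hsum : HasSum (fun i => c * ‖g (i + n)‖) (c * ∑' i, ‖g (i + n)‖) :=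
    ((summable_nat_add_iff n).mpr hg.norm).hasSum.mul_left c
  rw [Real.norm_of_nonneg (tsum_nonneg fun i => norm_nonneg _)]
  exact tsum_of_norm_bounded hsum fun i => hN (i + n) (by omega)

lemma isBigO_sum_Ico_two_mul_sq {x : ℕ → ℝ} (hx0 : ∀ n, 0 ≤ x n) {ε : ℝ} (hε : 0 ≤ ε)
    (hx : x =O[atTop] (fun n : ℕ => (n : ℝ) ^ (-ε)))
    (hblock : (fun n => ∑ i ∈ Finset.Ico n (2 * n), x i) =O[atTop] (fun _ => (1 : ℝ))) :
    (fun n => ∑ i ∈ Finset.Ico n (2 * n), x i ^ 2) =O[atTop] (fun n : ℕ => (n : ℝ) ^ (-ε)) := by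
  obtain ⟨c, hc0, hc⟩ := hx.exists_pos
  obtain ⟨N, hN⟩ := eventually_atTop.mp hc.bound
  have hsq : (fun n => ∑ i ∈ Finset.Ico n (2 * n), x i ^ 2)
      =O[atTop] (fun n => c * (n : ℝ) ^ (-ε) * ∑ i ∈ Finset.Ico n (2 * n), x i) := by
    refine IsBigO.of_bound' ((eventually_ge_atTop (max N 1)).mono fun n hn => ?_)
    have hn1 : (0 : ℝ) < n := by exact_mod_cast (le_of_max_le_right hn)
    rw [Real.norm_of_nonneg (Finset.sum_nonneg fun i _ => sq_nonneg _),
      Real.norm_of_nonneg (mul_nonneg (by positivity) (Finset.sum_nonneg fun i _ => hx0 i)),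
      Finset.mul_sum]
    refine Finset.sum_le_sum fun i hi => ?_
    have hni := (Finset.mem_Ico.mp hi).1
    have hxi := hN i (by omega)
    rw [Real.norm_of_nonneg (hx0 i), Real.norm_of_nonneg (by positivity)] at hxi
    rw [sq]
    refine mul_le_mul_of_nonneg_right (hxi.trans ?_) (hx0 i)
    exact mul_le_mul_of_nonneg_left
      (Real.rpow_le_rpow_of_nonpos hn1 (by exact_mod_cast hni) (by linarith)) hc0.le
  simpa using hsq.trans ((isBigO_const_mul_self c _ atTop).mul hblock)

lemma summable_and_isBigO_tsum_nat_add_of_isBigO_sum_Ico_two_mul {a : ℕ → ℝ}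
    (ha : ∀ n, 0 ≤ a n) {ε : ℝ} (hε : 0 < ε)
    (h : (fun n => ∑ i ∈ Finset.Ico n (2 * n), a i) =O[atTop] (fun n : ℕ => (n : ℝ) ^ (-ε))) :
    Summable a ∧ (fun n => ∑' i, a (i + n)) =O[atTop] (fun n : ℕ => (n : ℝ) ^ (-ε)) := by
  obtain ⟨B, hB0, hB⟩ := h.exists_pos
  obtain ⟨N, hN⟩ := eventually_atTop.mp (hB.bound.and (eventually_ge_atTop 1))
  have hblock : ∀ n ≥ N, ∑ i ∈ Finset.Ico n (2 * n), a i ≤ B * (n : ℝ) ^ (-ε) := by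
    intro n hn
    have h := (hN n hn).1
    rwa [Real.norm_of_nonneg (Finset.sum_nonneg fun i _ => ha i),
      Real.norm_of_nonneg (by positivity)] at h
  have h2ε : (2 : ℝ) ^ (-ε) < 1 := Real.rpow_lt_one_of_one_lt_of_neg one_lt_two (by linarith)
  set D := B / (1 - (2 : ℝ) ^ (-ε)) with hD
  -- `D` is the sum of the geometric series of block bounds `B (2ʲn) ^ (-ε)`
  have hdyadic : ∀ k, ∀ n ≥ N, ∑ i ∈ Finset.Ico n (2 ^ k * n), a i ≤ D * (n : ℝ) ^ (-ε) := by
    intro k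
    induction k with
    | zero =>
      intro n _
      simp only [pow_zero, one_mul, Finset.Ico_self, Finset.sum_empty]
      positivity
    | succ k ih =>
      intro n hn
      have hsplit := Finset.sum_Ico_consecutive a (by omega : n ≤ 2 * n)
        (by nlinarith [Nat.one_le_two_pow (n := k)] : 2 * n ≤ 2 ^ k * (2 * n))
      rw [show 2 ^ (k + 1) * n = 2 ^ k * (2 * n) by ring, ← hsplit]
      have hscale : ((2 * n : ℕ) : ℝ) ^ (-ε) = 2 ^ (-ε) * (n : ℝ) ^ (-ε) := by
        push_cast; exact Real.mul_rpow (by norm_num) n.cast_nonneg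
      calc _ ≤ B * (n : ℝ) ^ (-ε) + D * ((2 * n : ℕ) : ℝ) ^ (-ε) :=
            add_le_add (hblock n hn) (ih (2 * n) (by omega))
        _ = D * (n : ℝ) ^ (-ε) := by
            have hne : (1 : ℝ) - 2 ^ (-ε) ≠ 0 := (sub_pos.mpr h2ε).ne'
            rw [hscale, hD]; field_simp; ring
  have hpartial : ∀ n ≥ N, ∀ m, ∑ i ∈ Finset.range m, a (i + n) ≤ D * (n : ℝ) ^ (-ε) := by
    intro n hn m
    have hn1 := (hN n hn).2
    have hm : n + m ≤ 2 ^ m * n := by nlinarith [Nat.lt_two_pow_self (n := m)]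
    calc ∑ i ∈ Finset.range m, a (i + n) = ∑ i ∈ Finset.Ico n (n + m), a i := by
          rw [Finset.sum_Ico_eq_sum_range, Nat.add_sub_cancel_left]
          simp only [add_comm]
      _ ≤ ∑ i ∈ Finset.Ico n (2 ^ m * n), a i :=
          Finset.sum_le_sum_of_subset_of_nonneg (Finset.Ico_subset_Ico_right hm)
            fun i _ _ => ha i
      _ ≤ D * (n : ℝ) ^ (-ε) := hdyadic m n hn
  refine ⟨(summable_nat_add_iff N).mp
    (summable_of_sum_range_le (fun i => ha _) (hpartial N le_rfl)), ?_⟩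
  refine IsBigO.of_bound D ((eventually_ge_atTop N).mono fun n hn => ?_)
  rw [Real.norm_of_nonneg (tsum_nonneg fun i => ha _), Real.norm_of_nonneg (by positivity)]
  exact Real.tsum_le_of_sum_range_le (fun i => ha _) (hpartial n hn)

lemma sum_Icc_two_eq_telescope_add_tsum {a L r : ℕ → ℝ}
    (h : ∀ n ≥ 1, a (n + 1) = L (n + 1) - L n - r (n + 1)) (hr : Summable r) {n : ℕ}
    (hn : 1 ≤ n) :
    ∑ i ∈ Finset.Icc 2 n, a i = L n - L 1 - ∑' i, r (i + 2) + ∑' i, r (i + (n + 1)) := by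
  induction n, hn using Nat.le_induction with
  | base => simp
  | succ n hn ih =>
    rw [Finset.sum_Icc_succ_top (by omega), ih, h n hn,
      ((summable_nat_add_iff (n + 1)).mpr hr).tsum_eq_zero_add]
    simp only [zero_add, add_assoc, add_comm 1 (n + 1)]
    ring

section PartialSums

variable {w W : ℕ → ℝ}

lemma partialSum_succ (hW : ∀ n, W n = ∑ i ∈ Finset.Icc 1 n, w i) (n : ℕ) :
    W (n + 1) = W n + w (n + 1) := by
  rw [hW, hW, Finset.sum_Icc_succ_top (by omega)]

lemma monotone_partialSum (hw : ∀ n, 0 ≤ w n) (hW : ∀ n, W n = ∑ i ∈ Finset.Icc 1 n, w i) :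
    Monotone W :=
  monotone_nat_of_le_succ fun n => by rw [partialSum_succ hW]; linarith [hw (n + 1)]

lemma partialSum_pos (hw : ∀ n, 0 ≤ w n) (hw1 : 0 < w 1)
    (hW : ∀ n, W n = ∑ i ∈ Finset.Icc 1 n, w i) {n : ℕ} (hn : 1 ≤ n) : 0 < W n :=
  (by simpa [hW] using hw1 : 0 < W 1).trans_le (monotone_partialSum hw hW hn)

lemma div_partialSum_nonneg (hw : ∀ n, 0 ≤ w n) (hW : ∀ n, W n = ∑ i ∈ Finset.Icc 1 n, w i)
    (n : ℕ) : 0 ≤ w n / W n :=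
  div_nonneg (hw n) (by rw [hW]; exact Finset.sum_nonneg fun i _ => hw i)

lemma one_sub_div_partialSum_succ (hw : ∀ n, 0 ≤ w n) (hw1 : 0 < w 1)
    (hW : ∀ n, W n = ∑ i ∈ Finset.Icc 1 n, w i) (n : ℕ) :
    1 - w (n + 1) / W (n + 1) = W n / W (n + 1) := by
  rw [one_sub_div (partialSum_pos hw hw1 hW (by omega)).ne', partialSum_succ hW n,
    add_sub_cancel_right]

lemma log_partialSum_succ_sub (hw : ∀ n, 0 ≤ w n) (hw1 : 0 < w 1)
    (hW : ∀ n, W n = ∑ i ∈ Finset.Icc 1 n, w i) {n : ℕ} (hn : 1 ≤ n) :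
    Real.log (W (n + 1)) - Real.log (W n) = -Real.log (1 - w (n + 1) / W (n + 1)) := by
  rw [one_sub_div_partialSum_succ hw hw1 hW, Real.log_div (partialSum_pos hw hw1 hW hn).ne'
    (partialSum_pos hw hw1 hW (by omega)).ne']
  ring

lemma div_partialSum_succ_le_log_sub (hw : ∀ n, 0 ≤ w n) (hw1 : 0 < w 1)
    (hW : ∀ n, W n = ∑ i ∈ Finset.Icc 1 n, w i) {n : ℕ} (hn : 1 ≤ n) :
    w (n + 1) / W (n + 1) ≤ Real.log (W (n + 1)) - Real.log (W n) := by
  have hpos : 0 < 1 - w (n + 1) / W (n + 1) := by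
    rw [one_sub_div_partialSum_succ hw hw1 hW]
    exact div_pos (partialSum_pos hw hw1 hW hn) (partialSum_pos hw hw1 hW (by omega))
  rw [log_partialSum_succ_sub hw hw1 hW hn]
  linarith [Real.log_le_sub_one_of_pos hpos]

lemma sum_Ico_div_partialSum_le (hw : ∀ n, 0 ≤ w n) (hw1 : 0 < w 1)
    (hW : ∀ n, W n = ∑ i ∈ Finset.Icc 1 n, w i) {n : ℕ} (hn : 1 ≤ n) (m : ℕ) :
    ∑ i ∈ Finset.Ico n m, w i / W i ≤ W m / W n := by
  have hWn := partialSum_pos hw hw1 hW hn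
  calc ∑ i ∈ Finset.Ico n m, w i / W i ≤ ∑ i ∈ Finset.Ico n m, w i / W n :=
        Finset.sum_le_sum fun i hi => div_le_div_of_nonneg_left (hw i) hWn
          (monotone_partialSum hw hW (Finset.mem_Ico.mp hi).1)
    _ ≤ W m / W n := by
        rw [← Finset.sum_div, hW m]
        refine div_le_div_of_nonneg_right
          (Finset.sum_le_sum_of_subset_of_nonneg (fun i hi => ?_) fun i _ _ => hw i) hWn.le
        simp only [Finset.mem_Ico, Finset.mem_Icc] at hi ⊢
        omega

lemma isBigO_div_partialSum (hw : ∀ n, 0 ≤ w n) (hw1 : 0 < w 1)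
    (hW : ∀ n, W n = ∑ i ∈ Finset.Icc 1 n, w i) {γ c ε : ℝ} (hε1 : ε ≤ 1)
    (hlog : (fun n : ℕ => Real.log (W n) - (γ * Real.log n + c))
      =O[atTop] (fun n : ℕ => (n : ℝ) ^ (-ε))) :
    (fun n => w n / W n) =O[atTop] (fun n : ℕ => (n : ℝ) ^ (-ε)) := by
  set ℓ := fun n : ℕ => Real.log (W n) - (γ * Real.log n + c) with hℓ
  have hincr : (fun n : ℕ => ℓ (n + 1) - ℓ n + γ * (Real.log (n + 1) - Real.log n))
      =O[atTop] (fun n : ℕ => (n : ℝ) ^ (-ε)) :=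
    ((isBigO_natCast_rpow_comp_add_one_iff.mpr hlog).sub hlog).add
      ((isBigO_log_natCast_add_one_sub_log.const_mul_left γ).trans
        (isBigO_natCast_rpow_of_le (by linarith)))
  rw [← isBigO_natCast_rpow_comp_add_one_iff]
  refine IsBigO.trans (IsBigO.of_bound' ((eventually_ge_atTop 1).mono fun n hn => ?_)) hincr
  rw [Real.norm_of_nonneg (div_partialSum_nonneg hw hW _)]
  refine (div_partialSum_succ_le_log_sub hw hw1 hW hn).trans
    (le_of_eq_of_le ?_ (Real.le_norm_self _))
  simp only [hℓ]
  push_cast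
  ring

lemma isBigO_sum_Ico_two_mul_div_partialSum (hw : ∀ n, 0 ≤ w n) (hw1 : 0 < w 1)
    (hW : ∀ n, W n = ∑ i ∈ Finset.Icc 1 n, w i) {γ c ε : ℝ} (hε : 0 < ε)
    (hlog : (fun n : ℕ => Real.log (W n) - (γ * Real.log n + c))
      =O[atTop] (fun n : ℕ => (n : ℝ) ^ (-ε))) :
    (fun n => ∑ i ∈ Finset.Ico n (2 * n), w i / W i) =O[atTop] (fun _ => (1 : ℝ)) := by
  set ℓ := fun n : ℕ => Real.log (W n) - (γ * Real.log n + c) with hℓ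
  have hℓ0 : Tendsto ℓ atTop (𝓝 0) := hlog.trans_tendsto (tendsto_natCast_rpow_neg_atTop hε)
  have hdouble : Tendsto (fun n : ℕ => 2 * n) atTop atTop :=
    tendsto_id.const_mul_atTop' two_pos
  have hratio : Tendsto (fun n => W (2 * n) / W n) atTop (𝓝 (Real.exp (γ * Real.log 2))) := by
    have h := (((hℓ0.comp hdouble).sub hℓ0).add_const (γ * Real.log 2)).rexp
    rw [sub_zero, zero_add] at h
    refine h.congr' ((eventually_ge_atTop 1).mono fun n hn => ?_)
    have hn0 : (n : ℝ) ≠ 0 := by positivity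
    have hW2n := partialSum_pos hw hw1 hW (by omega : 1 ≤ 2 * n)
    have hWn := partialSum_pos hw hw1 hW hn
    show Real.exp (ℓ (2 * n) - ℓ n + γ * Real.log 2) = W (2 * n) / W n
    rw [← Real.exp_log (div_pos hW2n hWn), Real.log_div hW2n.ne' hWn.ne']
    simp only [hℓ]
    push_cast
    rw [Real.log_mul two_ne_zero hn0]
    ring_nf
  refine IsBigO.trans (IsBigO.of_bound' ((eventually_ge_atTop 1).mono fun n hn => ?_))
    (hratio.isBigO_one ℝ)
  rw [Real.norm_of_nonneg (Finset.sum_nonneg fun i _ => div_partialSum_nonneg hw hW i),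
    Real.norm_of_nonneg (div_nonneg (partialSum_pos hw hw1 hW (by omega)).le
      (partialSum_pos hw hw1 hW hn).le)]
  exact sum_Ico_div_partialSum_le hw hw1 hW hn _

end PartialSums

theorem weight_ratio_asymptotics_general
    (w : ℕ → ℝ) (hw : ∀ n, 0 ≤ w n) (hw1 : 0 < w 1)
    (W : ℕ → ℝ) (hW : ∀ n, W n = ∑ i ∈ Finset.Icc 1 n, w i)
    (C γ ε : ℝ) (hC : 0 < C) (hε : 0 < ε)
    (hWasymp : (fun n : ℕ => W n / (C * (n:ℝ) ^ γ) - 1) =O[atTop]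
      (fun n : ℕ => (n:ℝ) ^ (-ε))) :
    ∃ ε' > (0:ℝ),
      ((fun n : ℕ => ∑' i : ℕ, (w (n + i) / W (n + i)) ^ 2)
          =O[atTop] (fun n : ℕ => (n:ℝ) ^ (-ε'))) ∧
      ∃ c : ℝ,
        (fun n : ℕ => (∑ i ∈ Finset.Icc 2 n, w i / W i) - (γ * Real.log n + c))
          =O[atTop] (fun n : ℕ => (n:ℝ) ^ (-ε')) := by
  set δ := min ε 1
  have hδ : 0 < δ := lt_min hε one_pos
  have hlog := isBigO_log_sub_of_isBigO_div_sub_one hC hδ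
    (hWasymp.trans (isBigO_natCast_rpow_of_le (neg_le_neg (min_le_left ε 1))))
  have hx := isBigO_div_partialSum hw hw1 hW (min_le_right ε 1) hlog
  obtain ⟨hsq, hsq_tail⟩ := summable_and_isBigO_tsum_nat_add_of_isBigO_sum_Ico_two_mul
    (fun n => sq_nonneg (w n / W n)) hδ (isBigO_sum_Ico_two_mul_sq (div_partialSum_nonneg hw hW)
      hδ.le hx (isBigO_sum_Ico_two_mul_div_partialSum hw hw1 hW hδ hlog))
  refine ⟨δ, hδ, by simpa only [add_comm] using hsq_tail, ?_⟩
  -- the defect in `log W (i + 1) - log W i = -log (1 - w (i + 1) / W (i + 1))`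
  set r := fun i => -(w i / W i + Real.log (1 - w i / W i))
  have hr : r =O[atTop] (fun i => (w i / W i) ^ 2) :=
    (isBigO_add_log_one_sub_sq.comp_tendsto
      (hx.trans_tendsto (tendsto_natCast_rpow_neg_atTop hδ))).neg_left
  have hr_tail : (fun n => ∑' i, r (i + n)) =O[atTop] (fun n : ℕ => (n : ℝ) ^ (-δ)) :=
    (hr.tsum_nat_add hsq).trans
      (by simpa only [norm_pow, Real.norm_eq_abs, sq_abs] using hsq_tail)
  refine ⟨Real.log C - Real.log (W 1) - ∑' i, r (i + 2),
    (hlog.add (isBigO_natCast_rpow_comp_add_one_iff.mpr hr_tail)).congr' ?_ EventuallyEq.rfl⟩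
  filter_upwards [eventually_ge_atTop 1] with n hn
  rw [sum_Icc_two_eq_telescope_add_tsum (L := fun n => Real.log (W n)) (fun m hm => ?_)
    (summable_of_isBigO_nat hsq hr) hn]
  · ring
  · rw [log_partialSum_succ_sub hw hw1 hW hm]
    ring

theorem weight_ratio_asymptotics
    (w : ℕ → ℝ) (hw : ∀ n, 0 ≤ w n) (hw1 : 0 < w 1)
    (W : ℕ → ℝ) (hW : ∀ n, W n = ∑ i ∈ Finset.Icc 1 n, w i)
    (C γ ε : ℝ) (hC : 0 < C) (hγ : 0 < γ) (hε : 0 < ε) (hε1 : ε < 1)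
    (hWasymp : (fun n : ℕ => W n / (C * (n:ℝ) ^ γ) - 1) =O[atTop]
      (fun n : ℕ => (n:ℝ) ^ (-ε))) :
    ∃ ε' > (0:ℝ),
      ((fun n : ℕ => ∑' i : ℕ, (w (n + i) / W (n + i)) ^ 2)
          =O[atTop] (fun n : ℕ => (n:ℝ) ^ (-ε'))) ∧
      ∃ c : ℝ,
        (fun n : ℕ => (∑ i ∈ Finset.Icc 2 n, w i / W i) - (γ * Real.log n + c))
          =O[atTop] (fun n : ℕ => (n:ℝ) ^ (-ε')) :=
  weight_ratio_asymptotics_general w hw hw1 W hW C γ ε hC hε hWasymp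
end

section
/- Let a > −1 and b > 0, and for i ≥ 1 let β_i be a random variable with Beta(1 + a + (b+1)(i−1), b) distribution. Then for every natural number p ≥ 1 and every n ≥ 2, ∏_{i=1}^{n−1} E[β_i^p] = (Γ(1+a+p)/Γ(1+a)) · (Γ(a+(b+1)(n−1)) / Γ(a+(b+1)(n−1)+p)) · (Γ((a+p)/(b+1)+n−1) / Γ(a/(b+1)+n−1)) · (Γ(1+a/(b+1)) / Γ(1+(a+p)/(b+1))). -/
/-!
Each factor is a Beta moment, `E[β^q] = B(s + q, b) / B(s, b)`, which comes from
`u^q · u^(s-1) = u^(s+q-1)`: the density of `Beta(s, b)` times `u^q` is a multiple of the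
density of `Beta(s + q, b)`.  With `c_i = a + (b + 1) i` the `i`-th factor is
`Γ(c_{i-1} + 1 + q) Γ(c_i) / (Γ(c_{i-1} + 1) Γ(c_i + q))`. Shifting `x ↦ x + 1` multiplies
`Γ(x + q) / Γ(x)` by `(x + q) / x`, and shifting `x/(b+1) ↦ x/(b+1) + 1` multiplies
`Γ((x + q)/(b+1)) / Γ(x/(b+1))` by the same factor, so the product telescopes.
-/

open MeasureTheory Real

/-- The Beta(a,b) distribution on ℝ (density `Γ(a+b)/(Γ(a)Γ(b)) u^{a-1}(1-u)^{b-1}` on `[0,1]`),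
with the convention that `Beta(a,0)` is the Dirac mass at `1`. -/
noncomputable def betaMeasure (a b : ℝ) : Measure ℝ :=
  if b = 0 then Measure.dirac 1
  else volume.withDensity fun x =>
    ENNReal.ofReal ((Set.Icc (0:ℝ) 1).indicator
      (fun x => Real.Gamma (a + b) / (Real.Gamma a * Real.Gamma b)
        * x ^ (a - 1) * (1 - x) ^ (b - 1)) x)

open ProbabilityTheory (beta betaPDF betaPDFReal)

theorem betaMeasure_eq_probabilityTheory_betaMeasure {s b : ℝ} (hb : b ≠ 0) :
    betaMeasure s b = ProbabilityTheory.betaMeasure s b := by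
  rw [betaMeasure, if_neg hb, ProbabilityTheory.betaMeasure]
  refine withDensity_congr_ae ?_
  have hpdf : betaPDF s b = fun x => ENNReal.ofReal ((Set.Ioo (0:ℝ) 1).indicator
      (fun x => Gamma (s + b) / (Gamma s * Gamma b) * x ^ (s - 1) * (1 - x) ^ (b - 1)) x) := by
    ext x
    simp only [ProbabilityTheory.betaPDF_eq, Set.indicator_apply, Set.mem_Ioo, beta, one_div_div]
  rw [hpdf]
  exact (indicator_ae_eq_of_ae_eq_set Ioo_ae_eq_Icc).symm.fun_comp ENNReal.ofReal

namespace ProbabilityTheory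

theorem betaPDFReal_nonneg {s b : ℝ} (hs : 0 < s) (hb : 0 < b) (x : ℝ) :
    0 ≤ betaPDFReal s b x := by
  by_cases hx : 0 < x ∧ x < 1
  · exact (betaPDFReal_pos hx.1 hx.2 hs hb).le
  · simp [betaPDFReal, hx]

theorem integral_betaPDFReal {s b : ℝ} (hs : 0 < s) (hb : 0 < b) :
    ∫ x, betaPDFReal s b x = 1 := by
  rw [integral_eq_lintegral_of_nonneg_ae (.of_forall (betaPDFReal_nonneg hs hb))
    (measurable_betaPDFReal s b).aestronglyMeasurable]
  change (∫⁻ x, betaPDF s b x).toReal = 1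
  simp [lintegral_betaPDF_eq_one hs hb]

theorem betaPDFReal_mul_rpow {s b q : ℝ} (hsq : 0 < s + q) (hb : 0 < b) (x : ℝ) :
    betaPDFReal s b x * x ^ q = beta (s + q) b / beta s b * betaPDFReal (s + q) b x := by
  have hbeta : beta (s + q) b ≠ 0 := (beta_pos hsq hb).ne'
  by_cases hx : 0 < x ∧ x < 1
  · simp only [betaPDFReal, if_pos hx]
    rw [show s + q - 1 = s - 1 + q by ring, rpow_add hx.1]
    field_simp
  · simp [betaPDFReal, hx]

theorem integral_rpow_betaMeasure {s b q : ℝ} (hs : 0 < s) (hsq : 0 < s + q)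
    (hb : 0 < b) :
    ∫ x, x ^ q ∂betaMeasure s b = beta (s + q) b / beta s b := by
  rw [betaMeasure, integral_withDensity_eq_integral_toReal_smul (f := betaPDF s b)
    (measurable_betaPDFReal s b).ennreal_ofReal
    (.of_forall fun _ => ENNReal.ofReal_lt_top)]
  simp only [betaPDF, ENNReal.toReal_ofReal (betaPDFReal_nonneg hs hb _), smul_eq_mul,
    betaPDFReal_mul_rpow hsq hb, integral_const_mul, integral_betaPDFReal hsq hb, mul_one]

theorem beta_add_div_beta {s b : ℝ} (q : ℝ) (hb : 0 < b) :
    beta (s + q) b / beta s b = Gamma (s + q) / Gamma s * (Gamma (s + b) / Gamma (s + q + b)) := by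
  have := (Gamma_pos_of_pos hb).ne'
  simp only [beta]
  rw [div_div_div_eq]
  field_simp

end ProbabilityTheory

theorem integral_rpow_of_map_eq_betaMeasure {Ω : Type*} [MeasurableSpace Ω] {P : Measure Ω}
    {X : Ω → ℝ} {s b q : ℝ} (hX : P.map X = betaMeasure s b) (hs : 0 < s) (hsq : 0 < s + q)
    (hb : 0 < b) :
    ∫ ω, X ω ^ q ∂P = beta (s + q) b / beta s b := by
  rw [betaMeasure_eq_probabilityTheory_betaMeasure hb.ne'] at hX
  have : IsProbabilityMeasure (ProbabilityTheory.betaMeasure s b) :=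
    ProbabilityTheory.isProbabilityMeasureBeta hs hb
  have hXm : AEMeasurable X P := .of_map_ne_zero (hX ▸ IsProbabilityMeasure.ne_zero _)
  rw [← ProbabilityTheory.integral_rpow_betaMeasure hs hsq hb, ← hX,
    integral_map (f := fun x : ℝ => x ^ q) hXm (measurable_id.pow_const q).aestronglyMeasurable]

theorem beta_div_beta_mul_gamma_quotients_eq_shift {c b q : ℝ} (hc : 0 < c) (hcq : 0 < c + q)
    (hb : 0 < b) :
    beta (c + 1 + q) b / beta (c + 1) b *
        (Gamma c / Gamma (c + q) * (Gamma ((c + q) / (b + 1)) / Gamma (c / (b + 1))))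
      = Gamma (c + (b + 1)) / Gamma (c + (b + 1) + q) *
        (Gamma ((c + (b + 1) + q) / (b + 1)) / Gamma ((c + (b + 1)) / (b + 1))) := by
  have hb1 : 0 < b + 1 := by linarith
  have hcd : 0 < c / (b + 1) := div_pos hc hb1
  have hcqd : 0 < (c + q) / (b + 1) := div_pos hcq hb1
  rw [ProbabilityTheory.beta_add_div_beta q hb, show c + (b + 1) + q = c + q + 1 + b by ring,
    show c + (b + 1) = c + 1 + b by ring, add_right_comm c 1 q,
    show (c + q + 1 + b) / (b + 1) = (c + q) / (b + 1) + 1 by field_simp; ring,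
    show (c + 1 + b) / (b + 1) = c / (b + 1) + 1 by field_simp; ring,
    Gamma_add_one hc.ne', Gamma_add_one hcq.ne', Gamma_add_one hcd.ne', Gamma_add_one hcqd.ne']
  have := (Gamma_pos_of_pos hc).ne'
  have := (Gamma_pos_of_pos hcq).ne'
  have := (Gamma_pos_of_pos hcd).ne'
  have := (Gamma_pos_of_pos hcqd).ne'
  have := (Gamma_pos_of_pos (by linarith : 0 < c + 1 + b)).ne'
  have := (Gamma_pos_of_pos (by linarith : 0 < c + q + 1 + b)).ne'
  field_simp

theorem prod_beta_add_div_beta {a b q : ℝ} (ha : -1 < a) (hb : 0 < b) (hq : 0 < 1 + a + q)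
    {n : ℕ} (hn : 1 ≤ n) :
    ∏ i ∈ Finset.Icc 1 n,
        beta (1 + a + (b + 1) * ((i : ℝ) - 1) + q) b / beta (1 + a + (b + 1) * ((i : ℝ) - 1)) b
      = Gamma (1 + a + q) / Gamma (1 + a)
        * (Gamma (1 + a / (b + 1)) / Gamma (1 + (a + q) / (b + 1)))
        * (Gamma (a + (b + 1) * n) / Gamma (a + (b + 1) * n + q)
          * (Gamma ((a + (b + 1) * n + q) / (b + 1)) / Gamma ((a + (b + 1) * n) / (b + 1)))) := by
  have hb1 : 0 < b + 1 := by linarith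
  induction n, hn using Nat.le_induction with
  | base =>
    have h1 : 0 < 1 + a / (b + 1) := by
      rw [← neg_lt_iff_pos_add', lt_div_iff₀ hb1]; linarith
    have h2 : 0 < 1 + (a + q) / (b + 1) := by
      rw [← neg_lt_iff_pos_add', lt_div_iff₀ hb1]; linarith
    simp only [Finset.Icc_self, Finset.prod_singleton, Nat.cast_one, sub_self, mul_zero, add_zero,
      mul_one, ProbabilityTheory.beta_add_div_beta q hb]
    rw [show a + (b + 1) = 1 + a + b by ring,
      show (1 + a + b + q) / (b + 1) = 1 + (a + q) / (b + 1) by field_simp; ring,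
      show (1 + a + b) / (b + 1) = 1 + a / (b + 1) by field_simp; ring,
      add_right_comm (1 + a) q b, mul_mul_mul_comm _ (Gamma (1 + a / (b + 1)) / _),
      div_mul_div_cancel₀ (Gamma_pos_of_pos h2).ne', div_self (Gamma_pos_of_pos h1).ne', mul_one]
  | succ n hn ih =>
    have hn' : (1 : ℝ) ≤ n := by exact_mod_cast hn
    have hc : 0 < a + (b + 1) * n := by nlinarith
    rw [Finset.prod_Icc_succ_top (by omega), ih, Nat.cast_succ,
      show 1 + a + (b + 1) * ((n : ℝ) + 1 - 1) = a + (b + 1) * n + 1 by ring,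
      show a + (b + 1) * ((n : ℝ) + 1) = a + (b + 1) * n + (b + 1) by ring, mul_assoc,
      mul_comm (_ * _) (beta _ _ / _),
      beta_div_beta_mul_gamma_quotients_eq_shift hc (by nlinarith) hb]

theorem product_beta_moments_general
    {Ω : Type*} [MeasurableSpace Ω] (P : Measure Ω) [IsProbabilityMeasure P]
    (a b : ℝ) (ha : -1 < a) (hb : 0 < b)
    (β : ℕ → Ω → ℝ)
    (hβ : ∀ i, 1 ≤ i →
      Measure.map (β i) P = betaMeasure (1 + a + (b + 1) * ((i:ℝ) - 1)) b)
    (p : ℕ) (n : ℕ) (hn : 2 ≤ n) :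
    (∏ i ∈ Finset.Icc 1 (n - 1), ∫ ω, β i ω ^ p ∂P)
      = Real.Gamma (1 + a + p) / Real.Gamma (1 + a)
        * (Real.Gamma (a + (b + 1) * ((n:ℝ) - 1)) /
            Real.Gamma (a + (b + 1) * ((n:ℝ) - 1) + p))
        * (Real.Gamma ((a + p) / (b + 1) + (n:ℝ) - 1) /
            Real.Gamma (a / (b + 1) + (n:ℝ) - 1))
        * (Real.Gamma (1 + a / (b + 1)) / Real.Gamma (1 + (a + p) / (b + 1))) := by
  have moment : ∀ i ∈ Finset.Icc 1 (n - 1), ∫ ω, β i ω ^ p ∂P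
      = beta (1 + a + (b + 1) * ((i : ℝ) - 1) + p) b
        / beta (1 + a + (b + 1) * ((i : ℝ) - 1)) b := by
    intro i hi
    have hi1 : (1 : ℝ) ≤ i := by exact_mod_cast (Finset.mem_Icc.mp hi).1
    have hs : 0 < 1 + a + (b + 1) * ((i : ℝ) - 1) := by nlinarith
    simp_rw [← rpow_natCast]
    exact integral_rpow_of_map_eq_betaMeasure (hβ i (Finset.mem_Icc.mp hi).1) hs
      (add_pos_of_pos_of_nonneg hs p.cast_nonneg) hb
  have hb1 : b + 1 ≠ 0 := by positivity
  have hq : 0 < 1 + a + p := by linarith [p.cast_nonneg (α := ℝ)]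
  rw [Finset.prod_congr rfl moment, prod_beta_add_div_beta ha hb hq (by omega),
    Nat.cast_sub (by omega), Nat.cast_one,
    show (a + (b + 1) * ((n : ℝ) - 1) + p) / (b + 1) = (a + p) / (b + 1) + n - 1 by
      field_simp; ring,
    show (a + (b + 1) * ((n : ℝ) - 1)) / (b + 1) = a / (b + 1) + n - 1 by field_simp; ring]
  ring

theorem product_beta_moments
    {Ω : Type*} [MeasurableSpace Ω] (P : Measure Ω) [IsProbabilityMeasure P]
    (a b : ℝ) (ha : -1 < a) (hb : 0 < b)
    (β : ℕ → Ω → ℝ)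
    (hβ : ∀ i, 1 ≤ i →
      Measure.map (β i) P = betaMeasure (1 + a + (b + 1) * ((i:ℝ) - 1)) b)
    (p : ℕ) (hp : 1 ≤ p) (n : ℕ) (hn : 2 ≤ n) :
    (∏ i ∈ Finset.Icc 1 (n - 1), ∫ ω, β i ω ^ p ∂P)
      = Real.Gamma (1 + a + p) / Real.Gamma (1 + a)
        * (Real.Gamma (a + (b + 1) * ((n:ℝ) - 1)) /
            Real.Gamma (a + (b + 1) * ((n:ℝ) - 1) + p))
        * (Real.Gamma ((a + p) / (b + 1) + (n:ℝ) - 1) /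
            Real.Gamma (a / (b + 1) + (n:ℝ) - 1))
        * (Real.Gamma (1 + a / (b + 1)) / Real.Gamma (1 + (a + p) / (b + 1))) :=
  product_beta_moments_general P a b ha hb β hβ p n hn
end
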